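/- arXiv:1602.02448 — 8 statements merged into one kernel-verified Lean document; each statement's English description precedes it below -/
import Mathlib

section
/- Let n ≥ 4 be an even integer such that n + 1 is not a power of a prime. Then gcd(s(0,n), s(1,n), ..., s(n−2,n)) = 1. -/
/-!
For even `n`, `s(1,n) = -(n + 1)` and the second difference
`s(k+2,n) - 3 s(k+1,n) + 2 s(k,n) = -(2^(k+2) + 1) ((-1)^k C(n,k+2) - 1)`.
So a prime `p` dividing every `s(k,n)` divides `n + 1 = p^r m` with `p` odd, `p ∤ m`, and `m ≥ 3`
because `n + 1` is odd and not a prime power; moreover `p` divides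
`(2^j + 1) ((-1)^j C(n,j) - 1)` for `2 ≤ j ≤ n - 2`. Modulo `p` we have `2^(p^r) = 2`, and by Lucas
`C(n, p^r b) = C(m - 1, b)` since `n = p^r (m - 1) + (p^r - 1)`. For `p ≠ 3` the index `j = p^r`
gives `p ∣ 3m`; for `p = 3` the index `j = 2·3^r` gives `3 ∣ C(m - 1, 2) - 1`, while `C(m - 1, 2)`
is divisible by `3` as `m - 1 ≢ 2 (mod 3)`.
-/

/-- The change `s(k,n)` of the Milnor number of an `n`-dimensional complex manifold under
the modification `B_k`:
`s(k,n) = −( (n−k−1)·(2^{k+1}−1) + Σ_{i=0}^{k} (−1)^i·(2^i + (−1)^n·2^{k−i})·C(n−1,i) + n + (−1)^n )`. -/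
def milnorChange (k n : ℕ) : ℤ :=
  -(((n : ℤ) - k - 1) * (2 ^ (k + 1) - 1) +
      ∑ i ∈ Finset.range (k + 1),
        (-1) ^ i * (2 ^ i + (-1) ^ n * 2 ^ (k - i)) * ((n - 1).choose i : ℤ) +
    n + (-1) ^ n)

open Finset

lemma milnorChange_one_of_even {n : ℕ} (hn : n ≠ 0) (heven : Even n) :
    milnorChange 1 n = -(n + 1) := by
  obtain ⟨m, rfl⟩ := Nat.exists_eq_add_one_of_ne_zero hn
  simp only [milnorChange, heven.neg_one_pow, sum_range_succ, range_one, sum_singleton,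
    Nat.add_sub_cancel, Nat.choose_zero_right, Nat.choose_one_right, Nat.sub_zero, Nat.sub_self]
  push_cast
  ring

lemma milnorChange_second_difference_of_even {n : ℕ} (hn : n ≠ 0) (heven : Even n) (k : ℕ) :
    milnorChange (k + 2) n - 3 * milnorChange (k + 1) n + 2 * milnorChange k n =
      -((2 ^ (k + 2) + 1) * ((-1) ^ k * n.choose (k + 2) - 1)) := by
  obtain ⟨m, rfl⟩ := Nat.exists_eq_add_one_of_ne_zero hn
  have hpascal : ((m + 1).choose (k + 2) : ℤ) = m.choose (k + 1) + m.choose (k + 2) := by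
    rw [Nat.choose_succ_succ, Nat.cast_add]
  -- the summands with `i ≤ k` cancel: `2^i` and `2^(k-i)` both have vanishing second difference
  have hcommon : ∀ i ∈ range (k + 1),
      (-1) ^ i * (2 ^ i + 2 ^ (k + 2 - i)) * (m.choose i : ℤ) =
        3 * ((-1) ^ i * (2 ^ i + 2 ^ (k + 1 - i)) * m.choose i) -
          2 * ((-1) ^ i * (2 ^ i + 2 ^ (k - i)) * m.choose i) := by
    intro i hi
    rw [show k + 2 - i = k - i + 2 by grind, show k + 1 - i = k - i + 1 by grind]
    ring
  simp only [milnorChange, heven.neg_one_pow, one_mul, Nat.add_sub_cancel,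
    sum_range_succ _ (k + 2), sum_range_succ _ (k + 1), sum_congr rfl hcommon, sum_sub_distrib,
    ← mul_sum, hpascal, Nat.sub_self, show k + 2 - (k + 1) = 1 by omega]
  push_cast
  ring

namespace Choose

variable {p : ℕ} [Fact p.Prime]

theorem prime_dvd_choose_of_mod_lt_mod {n k : ℕ} (h : n % p < k % p) : p ∣ n.choose k := by
  rw [← Nat.modEq_zero_iff_dvd]
  simpa [Nat.choose_eq_zero_of_lt h] using
    choose_modEq_choose_mod_mul_choose_div_nat (p := p) (n := n) (k := k)

theorem choose_pow_mul_add_pred_pow_mul_modEq_choose_nat (r a b : ℕ) :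
    (p ^ r * a + (p ^ r - 1)).choose (p ^ r * b) ≡ a.choose b [MOD p] := by
  induction r with
  | zero => simp [Nat.ModEq.refl]
  | succ r ih =>
    have hp : 0 < p := Fact.out (p := p.Prime) |>.pos
    have hq : p ≤ p * p ^ r := Nat.le_mul_of_pos_right p (Nat.pow_pos hp)
    have hdigits :
        p ^ (r + 1) * a + (p ^ (r + 1) - 1) = p * (p ^ r * a + (p ^ r - 1)) + (p - 1) := by
      rw [pow_succ', mul_add, Nat.mul_sub_one, mul_assoc]
      omega
    have hlt : p - 1 < p := by omega
    refine (choose_modEq_choose_mod_mul_choose_div_nat).trans ?_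
    rw [hdigits, pow_succ', mul_assoc, Nat.mul_add_mod, Nat.mod_eq_of_lt hlt, Nat.mul_add_div hp,
      Nat.div_eq_of_lt hlt, Nat.mul_mod_right, Nat.mul_div_cancel_left _ hp]
    simpa using ih

end Choose

lemma exists_two_pow_add_one_mul_ne_zero {p r m n : ℕ} [hp : Fact p.Prime] (hp2 : p ≠ 2)
    (hr : r ≠ 0) (hpm : ¬p ∣ m) (hm : 3 ≤ m) (hn : n + 1 = p ^ r * m) :
    ∃ j, 2 ≤ j ∧ j ≤ n - 2 ∧ ((2 : ZMod p) ^ j + 1) * ((-1) ^ j * n.choose j - 1) ≠ 0 := by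
  set q := p ^ r
  have hq3 : 3 ≤ q := (show 3 ≤ p by have := hp.out.two_le; omega).trans (Nat.le_self_pow hr p)
  have hdigits : n = q * (m - 1) + (q - 1) := by
    obtain ⟨a, rfl⟩ : ∃ a, m = a + 1 := ⟨m - 1, by omega⟩
    rw [mul_add_one] at hn
    rw [Nat.add_sub_cancel]
    omega
  have hchoose (b : ℕ) : (n.choose (q * b) : ZMod p) = (m - 1).choose b := by
    rw [hdigits]
    exact (ZMod.natCast_eq_natCast_iff _ _ _).mpr
      (Choose.choose_pow_mul_add_pred_pow_mul_modEq_choose_nat r _ b)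
  have hfermat : (2 : ZMod p) ^ q = 2 := ZMod.pow_card_pow 2
  by_cases hp3 : p = 3
  · have : q * 2 ≤ q * (m - 1) := Nat.mul_le_mul_left q (by omega)
    refine ⟨q * 2, by omega, by omega, ?_⟩
    have hvanish : ((m - 1).choose 2 : ZMod p) = 0 := by
      rw [hp3] at hpm
      rw [ZMod.natCast_eq_zero_iff]
      exact Choose.prime_dvd_choose_of_mod_lt_mod (by rw [hp3]; omega)
    have h5 : ((5 : ℕ) : ZMod p) ≠ 0 := by
      rw [Ne, ZMod.natCast_eq_zero_iff, hp3]
      norm_num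
    rw [hchoose, hvanish, mul_zero, pow_mul, hfermat]
    convert neg_ne_zero.mpr h5 using 1
    push_cast
    ring
  · have : q ≤ q * (m - 1) := Nat.le_mul_of_pos_right q (by omega)
    refine ⟨q, by omega, by omega, ?_⟩
    have h3 : (3 : ZMod p) ≠ 0 := by
      intro h
      exact hp3 ((Nat.prime_dvd_prime_iff_eq hp.out Nat.prime_three).mp
        ((ZMod.natCast_eq_zero_iff 3 p).mp (by exact_mod_cast h)))
    have hm0 : (m : ZMod p) ≠ 0 := by rwa [Ne, ZMod.natCast_eq_zero_iff]
    have hq : q = q * 1 := (mul_one q).symm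
    rw [hq, hchoose, Nat.choose_one_right, ← hq, hfermat,
      (hp.out.odd_of_ne_two hp2).pow.neg_one_pow, Nat.cast_sub (by omega), Nat.cast_one]
    convert neg_ne_zero.mpr (mul_ne_zero h3 hm0) using 1
    ring

lemma two_pow_add_one_mul_eq_zero_of_dvd_milnorChange {p n : ℕ} (hn : n ≠ 0) (heven : Even n)
    (hdvd : ∀ k ≤ n - 2, (p : ℤ) ∣ milnorChange k n) {j : ℕ} (hj : 2 ≤ j) (hjn : j ≤ n - 2) :
    ((2 : ZMod p) ^ j + 1) * ((-1) ^ j * n.choose j - 1) = 0 := by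
  obtain ⟨k, rfl⟩ := Nat.exists_eq_add_of_le' hj
  have hdiff :
      (p : ℤ) ∣ milnorChange (k + 2) n - 3 * milnorChange (k + 1) n + 2 * milnorChange k n :=
    ((hdvd _ hjn).sub ((hdvd _ (by omega)).mul_left 3)).add ((hdvd _ (by omega)).mul_left 2)
  rw [milnorChange_second_difference_of_even hn heven, dvd_neg,
    ← ZMod.intCast_zmod_eq_zero_iff_dvd] at hdiff
  push_cast at hdiff
  rwa [show (-1 : ZMod p) ^ (k + 2) = (-1) ^ k by ring]

/-- Let `n ≥ 4` be even with `n + 1` not a prime power. Then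
`gcd(s(0,n), s(1,n), …, s(n−2,n)) = 1`. -/
theorem gcd_milnorChange_eq_one (n : ℕ) (hn : 4 ≤ n) (heven : Even n)
    (hnp : ¬∃ (p r : ℕ), p.Prime ∧ 1 ≤ r ∧ n + 1 = p ^ r) :
    Finset.gcd (Finset.range (n - 1)) (fun k => milnorChange k n) = 1 := by
  rw [← Finset.normalize_gcd, normalize_eq_one, Int.isUnit_iff_natAbs_eq,
    Nat.eq_one_iff_not_exists_prime_dvd]
  intro p hp hpg
  have := Fact.mk hp
  have hn0 : n ≠ 0 := by omega
  have hdvd (k : ℕ) (hk : k ≤ n - 2) : (p : ℤ) ∣ milnorChange k n :=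
    (Int.natCast_dvd.mpr hpg).trans (Finset.gcd_dvd (Finset.mem_range.mpr (by omega)))
  have hpn : p ∣ n + 1 := by
    have h1 := hdvd 1 (by omega)
    rw [milnorChange_one_of_even hn0 heven, dvd_neg] at h1
    exact_mod_cast h1
  have hodd : Odd (n + 1) := heven.add_one
  have hp2 : p ≠ 2 := by
    rintro rfl
    exact Nat.not_even_iff_odd.mpr hodd (even_iff_two_dvd.mpr hpn)
  obtain ⟨r, m, hpm, hnm⟩ := Nat.exists_eq_pow_mul_and_not_dvd n.add_one_ne_zero p hp.ne_one
  have hr : r ≠ 0 := by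
    rintro rfl
    rw [pow_zero, one_mul] at hnm
    exact hpm (hnm ▸ hpn)
  have hm : 3 ≤ m := by
    have hm1 : m ≠ 1 := by
      rintro rfl
      exact hnp ⟨p, r, hp, by omega, by simpa using hnm⟩
    obtain ⟨c, rfl⟩ := (Nat.odd_mul.mp (hnm ▸ hodd)).2
    omega
  obtain ⟨j, hj, hjn, hne⟩ := exists_two_pow_add_one_mul_ne_zero hp2 hr hpm hm hnm
  exact hne (two_pow_add_one_mul_eq_zero_of_dvd_milnorChange hn0 heven hdvd hj hjn)
end

section
/- For all integers n ≥ 4 and 2 ≤ k ≤ n−2, the linear combination L(k,n) := −s(k,n) + 3·s(k−1,n) − 2·s(k−2,n) satisfies L(k,n) = −2^k − 1 + (−1)^{n+k}·binom(n,k) + (−2)^k·binom(n,k). -/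
lemma sum_split (q j : ℕ) (c : ℤ) :
    ∑ i ∈ Finset.range (j + 1), (-1) ^ i * (2 ^ i + c * 2 ^ (j - i)) * (q.choose i : ℤ)
      = (∑ i ∈ Finset.range (j + 1), (-1) ^ i * 2 ^ i * (q.choose i : ℤ))
        + c * ∑ i ∈ Finset.range (j + 1), (-1) ^ i * 2 ^ (j - i) * (q.choose i : ℤ) := by
  rw [Finset.mul_sum, ← Finset.sum_add_distrib]
  exact Finset.sum_congr rfl fun i _ => by ring

lemma Bsucc (q j : ℕ) :
    ∑ i ∈ Finset.range (j + 2), (-1) ^ i * 2 ^ (j + 1 - i) * (q.choose i : ℤ)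
      = 2 * (∑ i ∈ Finset.range (j + 1), (-1) ^ i * 2 ^ (j - i) * (q.choose i : ℤ))
        + (-1) ^ (j + 1) * (q.choose (j + 1) : ℤ) := by
  rw [Finset.sum_range_succ, Finset.mul_sum]
  congr 1
  · refine Finset.sum_congr rfl fun i hi => ?_
    have h : j + 1 - i = (j - i) + 1 := by
      have := Finset.mem_range.mp hi; omega
    rw [h, pow_succ]; ring
  · simp

/-- For all integers `n ≥ 4` and `2 ≤ k ≤ n−2`, the linear combination
`L(k,n) := −s(k,n) + 3·s(k−1,n) − 2·s(k−2,n)` satisfies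
`L(k,n) = −2^k − 1 + (−1)^{n+k}·C(n,k) + (−2)^k·C(n,k)`. -/
theorem L_formula (n k : ℕ) (hn : 4 ≤ n) (hk2 : 2 ≤ k) (hk : k ≤ n - 2) :
    -milnorChange k n + 3 * milnorChange (k - 1) n - 2 * milnorChange (k - 2) n =
      -2 ^ k - 1 + (-1) ^ (n + k) * (n.choose k : ℤ) + (-2) ^ k * (n.choose k : ℤ) := by
  obtain ⟨m, rfl⟩ : ∃ m, k = m + 2 := ⟨k - 2, by omega⟩
  obtain ⟨q, rfl⟩ : ∃ q, n = q + 1 := ⟨n - 1, by omega⟩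
  have h1 : m + 2 - 1 = m + 1 := rfl
  have h2 : m + 2 - 2 = m := rfl
  have h3 : q + 1 - 1 = q := rfl
  simp only [milnorChange, h1, h2, h3]
  rw [show m + 2 + 1 = (m + 1) + 2 from rfl,
    sum_split q (m + 2), sum_split q (m + 1), sum_split q m,
    Bsucc q (m + 1), Bsucc q m,
    Finset.sum_range_succ _ (m + 2), Finset.sum_range_succ _ (m + 1)]
  have hP : ((q + 1).choose (m + 2) : ℤ) = q.choose (m + 1) + q.choose (m + 2) := by
    exact_mod_cast Nat.choose_succ_succ' q (m + 1)
  rw [hP]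
  push_cast
  have h4 : ((-2 : ℤ)) ^ m = (-1) ^ m * 2 ^ m := by
    rw [neg_pow]
  simp only [pow_add, pow_succ, h4]
  ring
end

section
/- For every even integer n ≥ 4 and every integer 2 ≤ k ≤ n−2, the linear combination L(k,n) := −s(k,n) + 3·s(k−1,n) − 2·s(k−2,n) satisfies L(k,n) = −(2^k + 1)·(1 + (−1)^{k+1}·binom(n,k)). -/
private lemma aux_split (n m : ℕ) (heven : Even n) :
    milnorChange m n =
      -(((n : ℤ) - m - 1) * (2 ^ (m + 1) - 1) +
        ((∑ i ∈ Finset.range (m + 1), (-1 : ℤ) ^ i * 2 ^ i * ((n - 1).choose i : ℤ)) +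
         (∑ i ∈ Finset.range (m + 1), (-1 : ℤ) ^ i * 2 ^ (m - i) * ((n - 1).choose i : ℤ))) +
        n + 1) := by
  unfold milnorChange
  rw [Even.neg_one_pow heven]
  have h : (∑ i ∈ Finset.range (m + 1),
      (-1 : ℤ) ^ i * (2 ^ i + 1 * 2 ^ (m - i)) * ((n - 1).choose i : ℤ)) =
      (∑ i ∈ Finset.range (m + 1), (-1 : ℤ) ^ i * 2 ^ i * ((n - 1).choose i : ℤ)) +
      (∑ i ∈ Finset.range (m + 1), (-1 : ℤ) ^ i * 2 ^ (m - i) * ((n - 1).choose i : ℤ)) := by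
    rw [← Finset.sum_add_distrib]
    exact Finset.sum_congr rfl fun i _ => by ring
  rw [h]

private lemma Qrec (n m : ℕ) :
    (∑ i ∈ Finset.range (m + 1 + 1), (-1 : ℤ) ^ i * 2 ^ (m + 1 - i) * ((n - 1).choose i : ℤ)) =
      2 * (∑ i ∈ Finset.range (m + 1), (-1 : ℤ) ^ i * 2 ^ (m - i) * ((n - 1).choose i : ℤ)) +
        (-1) ^ (m + 1) * ((n - 1).choose (m + 1) : ℤ) := by
  rw [Finset.sum_range_succ, Finset.mul_sum]
  congr 1
  · apply Finset.sum_congr rfl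
    intro i hi
    have h : m + 1 - i = (m - i) + 1 := by
      have := Finset.mem_range.mp hi; omega
    rw [h, pow_succ]; ring
  · simp

/-- For every even integer `n ≥ 4` and every integer `2 ≤ k ≤ n−2`, the
linear combination `L(k,n) := −s(k,n) + 3·s(k−1,n) − 2·s(k−2,n)` satisfies
`L(k,n) = −(2^k + 1)·(1 + (−1)^{k+1}·C(n,k))`. -/
theorem L_formula_even (n k : ℕ) (hn : 4 ≤ n) (heven : Even n) (hk2 : 2 ≤ k)
    (hk : k ≤ n - 2) :
    -milnorChange k n + 3 * milnorChange (k - 1) n - 2 * milnorChange (k - 2) n =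
      -(2 ^ k + 1) * (1 + (-1) ^ (k + 1) * (n.choose k : ℤ)) := by
  obtain ⟨j, rfl⟩ : ∃ j, k = j + 2 := ⟨k - 2, by omega⟩
  have e1 : j + 2 - 1 = j + 1 := by omega
  have e2 : j + 2 - 2 = j := by omega
  rw [e1, e2, aux_split n (j + 2) heven, aux_split n (j + 1) heven, aux_split n j heven]
  have hP1 : (∑ i ∈ Finset.range (j + 1 + 1), (-1 : ℤ) ^ i * 2 ^ i * ((n - 1).choose i : ℤ)) =
      (∑ i ∈ Finset.range (j + 1), (-1 : ℤ) ^ i * 2 ^ i * ((n - 1).choose i : ℤ)) +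
        (-1) ^ (j + 1) * 2 ^ (j + 1) * ((n - 1).choose (j + 1) : ℤ) :=
    Finset.sum_range_succ _ _
  have hP2 : (∑ i ∈ Finset.range (j + 2 + 1), (-1 : ℤ) ^ i * 2 ^ i * ((n - 1).choose i : ℤ)) =
      (∑ i ∈ Finset.range (j + 1 + 1), (-1 : ℤ) ^ i * 2 ^ i * ((n - 1).choose i : ℤ)) +
        (-1) ^ (j + 2) * 2 ^ (j + 2) * ((n - 1).choose (j + 2) : ℤ) :=
    Finset.sum_range_succ _ _
  have hQ1 := Qrec n j
  have hQ2 : (∑ i ∈ Finset.range (j + 2 + 1),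
      (-1 : ℤ) ^ i * 2 ^ (j + 2 - i) * ((n - 1).choose i : ℤ)) =
      2 * (∑ i ∈ Finset.range (j + 1 + 1),
        (-1 : ℤ) ^ i * 2 ^ (j + 1 - i) * ((n - 1).choose i : ℤ)) +
        (-1) ^ (j + 2) * ((n - 1).choose (j + 2) : ℤ) := Qrec n (j + 1)
  have hC : ((n.choose (j + 2) : ℕ) : ℤ) =
      ((n - 1).choose (j + 1) : ℤ) + ((n - 1).choose (j + 2) : ℤ) := by
    have h : n.choose (j + 2) = (n - 1).choose (j + 1) + (n - 1).choose (j + 2) := by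
      obtain ⟨m, rfl⟩ : ∃ m, n = m + 1 := ⟨n - 1, by omega⟩
      have := Nat.choose_succ_succ m (j + 1)
      simpa using this
    rw [h]; push_cast; ring
  rw [hP2, hP1, hQ2, hQ1, hC]
  push_cast
  ring
end

section
/- For all integers n ≥ 3 and 1 ≤ k ≤ n−2, one has −s(k,n) + 2·s(k−1,n) = −2^{k+1} − k + Σ_{i=0}^{k} (−2)^i·binom(n,i) + (−1)^{n+k}·binom(n−1,k) + 1 − (−1)^n. -/
private lemma lemA (n : ℕ) (hn : 1 ≤ n) (j : ℕ) :
    ∑ i ∈ Finset.range (j + 2), (-2 : ℤ) ^ i * ((n - 1).choose i : ℤ) -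
      2 * ∑ i ∈ Finset.range (j + 1), (-2 : ℤ) ^ i * ((n - 1).choose i : ℤ) =
    ∑ i ∈ Finset.range (j + 2), (-2 : ℤ) ^ i * (n.choose i : ℤ) := by
  induction j with
  | zero =>
      simp [Finset.sum_range_succ, Nat.choose_one_right]
      have : ((n - 1 : ℕ) : ℤ) = (n : ℤ) - 1 := by omega
      rw [this]; ring
  | succ j ih =>
      have pas : ((n.choose (j + 2) : ℤ)) =
          ((n - 1).choose (j + 1) : ℤ) + ((n - 1).choose (j + 2) : ℤ) := by
        have h : n.choose (j + 2) = (n - 1).choose (j + 1) + (n - 1).choose (j + 2) := by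
          conv_lhs => rw [show n = (n - 1) + 1 by omega]
          rw [Nat.choose_succ_succ]
        exact_mod_cast congrArg (Nat.cast : ℕ → ℤ) h
      simp only [Finset.sum_range_succ] at ih ⊢
      linear_combination ih - (-2 : ℤ) ^ (j + 2) * pas

private lemma lemB (n j : ℕ) :
    ∑ i ∈ Finset.range (j + 2), (-1 : ℤ) ^ i * 2 ^ (j + 1 - i) * ((n - 1).choose i : ℤ) =
      2 * ∑ i ∈ Finset.range (j + 1), (-1 : ℤ) ^ i * 2 ^ (j - i) * ((n - 1).choose i : ℤ) +
      (-1) ^ (j + 1) * ((n - 1).choose (j + 1) : ℤ) := by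
  rw [Finset.sum_range_succ, Nat.sub_self, pow_zero, Finset.mul_sum]
  congr 1
  · refine Finset.sum_congr rfl fun i hi => ?_
    rw [Finset.mem_range] at hi
    have : j + 1 - i = (j - i) + 1 := by omega
    rw [this, pow_succ]
    ring
  · ring

/-- For all integers `n ≥ 3` and `1 ≤ k ≤ n−2`, one has
`−s(k,n) + 2·s(k−1,n) = −2^{k+1} − k + Σ_{i=0}^{k} (−2)^i·C(n,i) + (−1)^{n+k}·C(n−1,k)
 + 1 − (−1)^n`. -/
theorem neg_s_add_two_s_pred (n k : ℕ) (hn : 3 ≤ n) (hk1 : 1 ≤ k) (hk : k ≤ n - 2) :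
    -milnorChange k n + 2 * milnorChange (k - 1) n =
      -2 ^ (k + 1) - k + ∑ i ∈ Finset.range (k + 1), (-2) ^ i * (n.choose i : ℤ) +
        (-1) ^ (n + k) * ((n - 1).choose k : ℤ) + 1 - (-1) ^ n := by
  obtain ⟨j, rfl⟩ : ∃ j, k = j + 1 := ⟨k - 1, (Nat.succ_pred_eq_of_pos hk1).symm⟩
  simp only [milnorChange, Nat.add_sub_cancel]
  have split : ∀ m : ℕ,
      ∑ i ∈ Finset.range (m + 1),
          (-1 : ℤ) ^ i * (2 ^ i + (-1) ^ n * 2 ^ (m - i)) * ((n - 1).choose i : ℤ) =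
        (∑ i ∈ Finset.range (m + 1), (-2 : ℤ) ^ i * ((n - 1).choose i : ℤ)) +
          (-1) ^ n *
            ∑ i ∈ Finset.range (m + 1), (-1 : ℤ) ^ i * 2 ^ (m - i) * ((n - 1).choose i : ℤ) := by
    intro m
    rw [Finset.mul_sum, ← Finset.sum_add_distrib]
    refine Finset.sum_congr rfl fun i _ => ?_
    rw [show (-2 : ℤ) = (-1) * 2 by ring, mul_pow]
    ring
  rw [split (j + 1), split j]
  have hA := lemA n (by omega) j
  have hB := lemB n j
  push_cast
  linear_combination hA + (-1 : ℤ) ^ n * hB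
end

section
/- For every integer n ≥ 2, one has S(n−2,n) = 2^n − 1 if n is even and S(n−2,n) = 0 if n is odd. -/
lemma binA (M : ℕ) : ∑ i ∈ Finset.range (M+1), (-2:ℤ)^i * (M.choose i) = (-1)^M := by
  have h := add_pow (-2:ℤ) 1 M
  norm_num at h
  exact h.symm

lemma binB (M : ℕ) : ∑ i ∈ Finset.range (M+1), (-1:ℤ)^i * 2^(M-i) * (M.choose i) = 1 := by
  have h := add_pow (-1:ℤ) 2 M
  norm_num at h
  rw [← h]

/-- The Milnor number `S(k,n)` of the stably complex manifold `D_{k,n}`. -/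
def milnorD (k n : ℕ) : ℤ :=
  ((n : ℤ) - k - 1) * (2 ^ (k + 1) - 1) +
    ∑ i ∈ Finset.range (k + 1),
      (-1) ^ i * (2 ^ i + (-1) ^ n * 2 ^ (k - i)) * ((n - 1).choose i : ℤ)

lemma key (m : ℕ) : milnorD m (m + 2) =
    2 ^ (m+1) - 1 +
    (∑ i ∈ Finset.range (m+1), (-2:ℤ)^i * ((m+1).choose i)) +
    (-1)^m * ∑ i ∈ Finset.range (m+1), (-1:ℤ)^i * 2^(m-i) * ((m+1).choose i) := by
  have h1 : ((-1:ℤ))^(m+2) = (-1)^m := by rw [pow_add]; norm_num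
  unfold milnorD
  have h2 : m + 2 - 1 = m + 1 := rfl
  have hs : ∑ i ∈ Finset.range (m+1),
        (-1:ℤ)^i * (2^i + (-1)^m * 2^(m-i)) * ((m+1).choose i)
      = (∑ i ∈ Finset.range (m+1), (-2:ℤ)^i * ((m+1).choose i)) +
        (-1)^m * ∑ i ∈ Finset.range (m+1), (-1:ℤ)^i * 2^(m-i) * ((m+1).choose i) := by
    rw [Finset.mul_sum, ← Finset.sum_add_distrib]
    apply Finset.sum_congr rfl
    intro i _
    rw [show ((-2):ℤ) = (-1)*2 from by norm_num, mul_pow]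
    ring
  rw [h2, h1, hs]
  push_cast
  ring

lemma keyA (m : ℕ) : ∑ i ∈ Finset.range (m+1), (-2:ℤ)^i * ((m+1).choose i)
    = (-1)^(m+1) - (-2)^(m+1) := by
  have := binA (m+1)
  rw [Finset.sum_range_succ] at this
  simp at this ⊢
  linarith

lemma keyB (m : ℕ) : 2 * ∑ i ∈ Finset.range (m+1), (-1:ℤ)^i * 2^(m-i) * ((m+1).choose i)
    = 1 - (-1)^(m+1) := by
  have h2 : (2:ℤ) * ∑ i ∈ Finset.range (m+1), (-1:ℤ)^i * 2^(m-i) * ((m+1).choose i)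
      = ∑ i ∈ Finset.range (m+1), (-1:ℤ)^i * 2^(m+1-i) * ((m+1).choose i) := by
    rw [Finset.mul_sum]
    apply Finset.sum_congr rfl
    intro i hi
    have hi' : i ≤ m := by simpa [Nat.lt_succ] using hi
    have h : m + 1 - i = (m - i) + 1 := by omega
    rw [h, pow_succ]
    ring
  have hb := binB (m+1)
  rw [Finset.sum_range_succ] at hb
  simp at hb
  rw [h2]
  linarith

/-- For every integer `n ≥ 2`, one has `S(n−2,n) = 2^n − 1` if `n` is
even and `S(n−2,n) = 0` if `n` is odd. -/
theorem milnorD_top (n : ℕ) (hn : 2 ≤ n) :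
    (Even n → milnorD (n - 2) n = 2 ^ n - 1) ∧
    (Odd n → milnorD (n - 2) n = 0) := by
  obtain ⟨m, rfl⟩ : ∃ m, n = m + 2 := ⟨n - 2, by omega⟩
  have h2 : m + 2 - 2 = m := by omega
  rw [h2, key m]
  have hA := keyA m
  have hB := keyB m
  have hpow : (2:ℤ)^(m+2) = 2 * 2^(m+1) := by ring
  constructor
  · intro he
    have hm : Even m := by simpa [Nat.even_add] using he
    have e1 : ((-1:ℤ))^m = 1 := hm.neg_one_pow
    have e2 : ((-1:ℤ))^(m+1) = -1 := (hm.add_one).neg_one_pow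
    have e3 : ((-2:ℤ))^(m+1) = -(2^(m+1)) := (hm.add_one).neg_pow 2
    rw [hA, e1, e2, e3]
    rw [e2] at hB
    linarith
  · intro ho
    have hm : Odd m := by
      have : ¬ Even m := by
        intro h
        exact (Nat.not_even_iff_odd.mpr ho) (by simpa [Nat.even_add] using h)
      exact Nat.not_even_iff_odd.mp this
    have e1 : ((-1:ℤ))^m = -1 := hm.neg_one_pow
    have e2 : ((-1:ℤ))^(m+1) = 1 := (hm.add_one).neg_one_pow
    have e3 : ((-2:ℤ))^(m+1) = 2^(m+1) := (hm.add_one).neg_pow 2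
    rw [hA, e1, e2, e3]
    rw [e2] at hB
    linarith
end

section
/- Let n ≥ 2 and 0 ≤ k ≤ n−2 be integers. In the ring of formal power series ℤ⟦u⟧, the coefficient of u^k in the series ((1+u)^{n−k−1})⁻¹ · (1−u)⁻¹ equals Σ_{i=0}^{k} (−1)^i · 2^{k−i} · binom(n−1, i). -/
/-!
With `n = a + k + 2`, the series `f` is `(1 + X)^{-(a+1)}`, whose `j`-th coefficient is
`(-1)^j C(a + j, j)`, and `g` is the geometric series, so the coefficient in question is the
partial sum `∑_{i ≤ k} (-1)^i C(a + i, i)`. Passing from `k` to `k + 1` with `a` fixed adds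
`(-1)^{k+1} C(a + k + 1, k + 1)` to this sum; by Pascal's rule the right-hand side
`∑_{i ≤ k} (-1)^i 2^{k-i} C(a + k + 1, i)` grows by the same amount, and both start at `1`.
-/

open PowerSeries Finset

namespace PowerSeries

theorem one_add_X_pow_mul_rescale_invOneSubPow {A : Type*} [CommRing A] (d : ℕ) :
    (1 + X : A⟦X⟧) ^ d * rescale (-1 : A) (invOneSubPow A d) = 1 := by
  rw [rescale_neg_one_invOneSubPow, ← binomialSeries_nat (R := ℤ), ← binomialSeries_add]
  simp

theorem coeff_rescale_neg_one_invOneSubPow_succ {A : Type*} [CommRing A] (d j : ℕ) :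
    coeff j (rescale (-1 : A) (invOneSubPow A (d + 1))) = (-1) ^ j * (d + j).choose j := by
  rw [coeff_rescale, invOneSubPow_val_succ_eq_mk_add_choose, coeff_mk, Nat.choose_symm_add]

theorem coeff_mul_mk_one {R : Type*} [Semiring R] (φ : R⟦X⟧) (k : ℕ) :
    coeff k (φ * mk 1) = ∑ i ∈ range (k + 1), coeff i φ := by
  simp [coeff_mul, Nat.sum_antidiagonal_eq_sum_range_succ_mk]

end PowerSeries

theorem sum_range_succ_neg_one_pow_two_pow_choose_succ (N k : ℕ) :
    ∑ i ∈ range (k + 2), (-1 : ℤ) ^ i * 2 ^ (k + 1 - i) * ((N + 1).choose i : ℤ) =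
      ∑ i ∈ range (k + 1), (-1 : ℤ) ^ i * 2 ^ (k - i) * (N.choose i : ℤ) +
        (-1) ^ (k + 1) * (N.choose (k + 1) : ℤ) := by
  set T := ∑ i ∈ range (k + 1), (-1 : ℤ) ^ i * 2 ^ (k - i) * (N.choose i : ℤ)
  have hpascal : ∀ i ∈ range (k + 1),
      (-1 : ℤ) ^ (i + 1) * 2 ^ (k + 1 - (i + 1)) * ((N + 1).choose (i + 1) : ℤ) =
        -((-1 : ℤ) ^ i * 2 ^ (k - i) * (N.choose i : ℤ)) +
          (-1 : ℤ) ^ (i + 1) * 2 ^ (k - i) * (N.choose (i + 1) : ℤ) := by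
    intro i _
    rw [Nat.choose_succ_succ', Nat.add_sub_add_right]
    push_cast
    ring
  have htwice : 2 * T =
      ∑ i ∈ range (k + 1), (-1 : ℤ) ^ i * 2 ^ (k + 1 - i) * (N.choose i : ℤ) := by
    rw [mul_sum]
    refine sum_congr rfl fun i hi ↦ ?_
    rw [Nat.succ_sub (Nat.le_of_lt_succ (mem_range.mp hi)), pow_succ]
    ring
  have hshift := sum_range_succ' (fun i ↦ (-1 : ℤ) ^ i * 2 ^ (k + 1 - i) * (N.choose i : ℤ)) (k + 1)
  rw [sum_range_succ, ← htwice] at hshift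
  rw [sum_range_succ', sum_congr rfl hpascal, sum_add_distrib, sum_neg_distrib]
  simp only [Nat.add_sub_add_right, Nat.sub_self, Nat.sub_zero, pow_zero, one_mul,
    Nat.choose_zero_right, Nat.cast_one, mul_one] at hshift ⊢
  linear_combination -hshift

theorem sum_range_neg_one_pow_mul_add_choose (a k : ℕ) :
    ∑ i ∈ range (k + 1), (-1 : ℤ) ^ i * ((a + i).choose i : ℤ) =
      ∑ i ∈ range (k + 1), (-1 : ℤ) ^ i * 2 ^ (k - i) * ((a + k + 1).choose i : ℤ) := by
  induction k with
  | zero => simp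
  | succ k ih =>
    rw [sum_range_succ, ih, ← add_assoc a k 1, sum_range_succ_neg_one_pow_two_pow_choose_succ]

/-- Let `n ≥ 2` and `0 ≤ k ≤ n−2`. In `ℤ⟦u⟧`, the coefficient of `u^k`
in `((1+u)^{n−k−1})⁻¹ · (1−u)⁻¹` equals `Σ_{i=0}^{k} (−1)^i · 2^{k−i} · C(n−1, i)`.
(The inverses are witnessed by power series `f`, `g` with
`f · (1+u)^{n−k−1} = 1` and `g · (1−u) = 1`.) -/
theorem coeff_inv_mul_inv (n k : ℕ) (hn : 2 ≤ n) (hk : k ≤ n - 2)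
    (f g : PowerSeries ℤ)
    (hf : f * (1 + X) ^ (n - k - 1) = 1) (hg : g * (1 - X) = 1) :
    coeff k (f * g) =
      ∑ i ∈ Finset.range (k + 1), (-1) ^ i * 2 ^ (k - i) * ((n - 1).choose i : ℤ) := by
  obtain ⟨a, rfl⟩ : ∃ a, n = a + k + 2 := ⟨n - k - 2, by omega⟩
  have hf' : f = rescale (-1) (invOneSubPow ℤ (a + 1) : ℤ⟦X⟧) :=
    left_inv_eq_right_inv hf <| by
      rw [show a + k + 2 - k - 1 = a + 1 by omega]
      exact one_add_X_pow_mul_rescale_invOneSubPow (a + 1)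
  have hg' : g = PowerSeries.mk 1 :=
    left_inv_eq_right_inv hg <| (mul_comm _ _).trans (mk_one_mul_one_sub_eq_one ℤ)
  rw [hf', hg', coeff_mul_mk_one, show a + k + 2 - 1 = a + k + 1 by omega,
    ← sum_range_neg_one_pow_mul_add_choose]
  exact sum_congr rfl fun i _ ↦ coeff_rescale_neg_one_invOneSubPow_succ a i
end

section
/- Let n ≥ 2 and 0 ≤ k ≤ n−2 be integers. In the ring of formal power series ℤ⟦u⟧, the coefficient of u^k in the series (1−u)^{n−1} · ((1+u)^{n−k−1})⁻¹ equals Σ_{i=0}^{k} (−2)^i · binom(n−1, i). -/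
/-! Write `1 - u = (1 + u) - 2u` and expand binomially. Dividing the `j`-th term
`C(m, j) (-2u)^j (1 + u)^(m - j)` by `(1 + u)^(m - k)` leaves the polynomial
`C(m, j) (-2)^j u^j (1 + u)^(k - j)` when `j ≤ k`, whose coefficient of `u^k` is
`(-2)^j C(m, j)`; when `j > k` the factor `u^j` kills that coefficient. -/

open PowerSeries

namespace PowerSeries

theorem coeff_one_add_X_pow {R : Type*} [Semiring R] (m d : ℕ) :
    coeff d ((1 + X : R⟦X⟧) ^ m) = m.choose d := by
  rw [← Polynomial.coeff_one_add_X_pow R m d, ← Polynomial.coeff_coe]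
  simp

variable {R : Type*} [CommRing R]

theorem one_sub_X_pow_eq_sum (m : ℕ) :
    (1 - X : R⟦X⟧) ^ m =
      ∑ j ∈ Finset.range (m + 1), C ((-2 : R) ^ j * m.choose j) * (X ^ j * (1 + X) ^ (m - j)) := by
  rw [show (1 - X : R⟦X⟧) = -2 * X + (1 + X) by ring, add_pow]
  refine Finset.sum_congr rfl fun j _ => ?_
  simp only [map_mul, map_pow, map_neg, map_ofNat, map_natCast]
  ring

theorem coeff_X_pow_mul_one_add_X_pow_mul_of_mul_pow_eq_one {m k : ℕ} {f : R⟦X⟧}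
    (hkm : k ≤ m) (hf : f * (1 + X) ^ (m - k) = 1) (j : ℕ) :
    coeff k (X ^ j * (1 + X) ^ (m - j) * f) = if j ≤ k then 1 else 0 := by
  rw [mul_assoc, coeff_X_pow_mul']
  split_ifs with hjk
  · have hcancel : (1 + X) ^ (m - j) * f = (1 + X : R⟦X⟧) ^ (k - j) := by
      rw [show m - j = k - j + (m - k) by omega, pow_add, mul_assoc, mul_comm _ f, hf, mul_one]
    rw [hcancel, coeff_one_add_X_pow, Nat.choose_self, Nat.cast_one]
  · rfl

theorem coeff_one_sub_X_pow_mul_of_mul_pow_eq_one {m k : ℕ} {f : R⟦X⟧}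
    (hkm : k ≤ m) (hf : f * (1 + X) ^ (m - k) = 1) :
    coeff k ((1 - X) ^ m * f) = ∑ i ∈ Finset.range (k + 1), (-2) ^ i * (m.choose i : R) := by
  simp_rw [one_sub_X_pow_eq_sum, Finset.sum_mul, map_sum, mul_assoc, coeff_C_mul, ← mul_assoc,
    coeff_X_pow_mul_one_add_X_pow_mul_of_mul_pow_eq_one hkm hf, mul_ite, mul_one, mul_zero,
    ← Finset.sum_filter]
  congr 1
  ext i
  simp only [Finset.mem_filter, Finset.mem_range]
  omega

end PowerSeries

theorem coeff_pow_mul_inv_general (n k : ℕ) (hk : k ≤ n - 2)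
    (f : PowerSeries ℤ) (hf : f * (1 + X) ^ (n - k - 1) = 1) :
    coeff k ((1 - X) ^ (n - 1) * f) =
      ∑ i ∈ Finset.range (k + 1), (-2) ^ i * ((n - 1).choose i : ℤ) :=
  coeff_one_sub_X_pow_mul_of_mul_pow_eq_one (by omega) (by rwa [Nat.sub_right_comm])

/-- Let `n ≥ 2` and `0 ≤ k ≤ n−2`. In `ℤ⟦u⟧`, the coefficient of `u^k`
in `(1−u)^{n−1} · ((1+u)^{n−k−1})⁻¹` equals `Σ_{i=0}^{k} (−2)^i · C(n−1, i)`.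
(The inverse is witnessed by a power series `f` with `f · (1+u)^{n−k−1} = 1`.) -/
theorem coeff_pow_mul_inv (n k : ℕ) (hn : 2 ≤ n) (hk : k ≤ n - 2)
    (f : PowerSeries ℤ) (hf : f * (1 + X) ^ (n - k - 1) = 1) :
    coeff k ((1 - X) ^ (n - 1) * f) =
      ∑ i ∈ Finset.range (k + 1), (-2) ^ i * ((n - 1).choose i : ℤ) :=
  coeff_pow_mul_inv_general n k hk f hf
end

section
/- Let n ≥ 4 be an even integer and let p be a prime dividing n + 1, where n + 1 is not a power of p. Then there exists an integer k with 2 ≤ k ≤ n−2 such that p does not divide (2^k + 1)·(1 + (−1)^{k+1}·binom(n,k)); equivalently, 2^k is not congruent to −1 modulo p and binom(n,k) is not congruent to (−1)^k modulo p. -/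
open Finset Nat

/-- Let `n ≥ 4` be even and let `p` be a prime dividing `n + 1`, where
`n + 1` is not a power of `p`. Then there exists `k` with `2 ≤ k ≤ n−2` such that `p` does
not divide `(2^k + 1)·(1 + (−1)^{k+1}·C(n,k))`; equivalently, `2^k ≢ −1 (mod p)` and
`C(n,k) ≢ (−1)^k (mod p)`. -/
theorem exists_k_not_dvd (n p : ℕ) (hn : 4 ≤ n) (heven : Even n) (hp : p.Prime)
    (hdvd : p ∣ n + 1) (hnp : ¬∃ r : ℕ, 1 ≤ r ∧ n + 1 = p ^ r) :
    ∃ k : ℕ, 2 ≤ k ∧ k ≤ n - 2 ∧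
      ¬((p : ℤ) ∣ (2 ^ k + 1) * (1 + (-1) ^ (k + 1) * (n.choose k : ℤ))) ∧
      ¬((2 : ℤ) ^ k ≡ -1 [ZMOD p]) ∧ ¬((n.choose k : ℤ) ≡ (-1) ^ k [ZMOD p]) := by
  haveI : Fact p.Prime := ⟨hp⟩
  obtain ⟨a, m, hpm, hfac⟩ := Nat.exists_eq_pow_mul_and_not_dvd (Nat.succ_ne_zero n) p hp.ne_one
  have hfac2 : n + 1 = p ^ a * m := hfac
  have hodd : Odd (n + 1) := heven.add_one
  have hp2 : p ≠ 2 := by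
    rintro rfl
    obtain ⟨t, ht⟩ := hdvd
    obtain ⟨s, hs⟩ := hodd
    omega
  have hp3 : 3 ≤ p := by have := hp.two_le; omega
  have ha : 1 ≤ a := by
    by_contra h
    have ha0 : a = 0 := by omega
    subst ha0
    simp only [pow_zero, one_mul] at hfac
    exact hpm (hfac ▸ hdvd)
  have hm1 : m ≠ 1 := by rintro rfl; exact hnp ⟨a, ha, by simpa using hfac2⟩
  have hmodd : Odd m := by
    have h : Odd (p ^ a * m) := by rw [← hfac2]; exact hodd
    exact (Nat.odd_mul.mp h).2
  have hm3 : 3 ≤ m := by obtain ⟨cc, hcc⟩ := hmodd; omega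
  obtain ⟨c, rfl⟩ : ∃ c, m = c + 1 := ⟨m - 1, by omega⟩
  have hc2 : 2 ≤ c := by omega
  have hpa3 : 3 ≤ p ^ a := le_trans hp3 (Nat.le_self_pow (by omega) p)
  have hfac' : n + 1 = p ^ a * c + p ^ a := by rw [hfac2]; ring
  have hmul : p ^ a * 2 ≤ p ^ a * c := Nat.mul_le_mul_left _ hc2
  -- n % p = p - 1
  have hnmod : n % p = p - 1 := by
    obtain ⟨t, ht⟩ := hdvd
    have ht1 : 1 ≤ t := by
      rcases Nat.eq_zero_or_pos t with rfl | h
      · simp at ht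
      · exact h
    obtain ⟨s, rfl⟩ : ∃ s, t = s + 1 := ⟨t - 1, by omega⟩
    have ht' : n = p * s + (p - 1) := by
      have : n + 1 = p * s + p := by rw [ht]; ring
      omega
    rw [ht', Nat.mul_add_mod, Nat.mod_eq_of_lt (by omega)]
  -- n / p^a = c
  have hdiv : n / p ^ a = c := by
    have hn' : n = p ^ a * c + (p ^ a - 1) := by omega
    rw [hn', Nat.mul_add_div (by omega), Nat.div_eq_of_lt (by omega)]
    omega
  -- Lucas computations
  have key1 : (n.choose (p ^ a) : ℤ) ≡ (c : ℤ) [ZMOD p] := by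
    have key := Choose.choose_modEq_choose_mul_prod_range_choose (p := p) (n := n) (k := p ^ a) a
    have e1 : (n / p ^ a).choose (p ^ a / p ^ a) *
        ∏ i ∈ range a, ((n / p ^ i % p).choose (p ^ a / p ^ i % p)) = c := by
      rw [Nat.div_self (by omega), hdiv, Finset.prod_eq_one, Nat.choose_one_right, mul_one]
      intro i hi
      rw [mem_range] at hi
      have h0 : p ^ a / p ^ i % p = 0 := by
        rw [Nat.pow_div (le_of_lt hi) (by omega)]
        exact Nat.mod_eq_zero_of_dvd (dvd_pow_self p (by omega))
      rw [h0, Nat.choose_zero_right]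
    rw [← Nat.cast_mul, e1] at key
    exact key
  have key2 : (n.choose (p ^ a + 1) : ℤ) ≡ ((c * (p - 1) : ℕ) : ℤ) [ZMOD p] := by
    have key := Choose.choose_modEq_choose_mul_prod_range_choose
      (p := p) (n := n) (k := p ^ a + 1) a
    have hk1 : (p ^ a + 1) / p ^ a = 1 := by
      rw [Nat.add_comm, Nat.add_div_right _ (by omega), Nat.div_eq_of_lt (by omega)]
    have e2 : (n / p ^ a).choose ((p ^ a + 1) / p ^ a) *
        ∏ i ∈ range a, ((n / p ^ i % p).choose ((p ^ a + 1) / p ^ i % p)) = c * (p - 1) := by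
      rw [hk1, hdiv, Nat.choose_one_right]
      congr 1
      rw [Finset.prod_eq_single 0]
      · have hm0 : (p ^ a + 1) % p = 1 := by
          have hpa : p ^ a % p = 0 :=
            Nat.mod_eq_zero_of_dvd (dvd_pow_self p (by omega))
          rw [Nat.add_mod, hpa, Nat.zero_add, Nat.mod_mod_of_dvd, Nat.mod_eq_of_lt (by omega)]
          exact dvd_refl p
        simp only [pow_zero, Nat.div_one]
        rw [hnmod, hm0, Nat.choose_one_right]
      · intro i hi hi0
        rw [mem_range] at hi
        have hdiv2 : (p ^ a + 1) / p ^ i = p ^ (a - i) := by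
          have : p ^ a = p ^ i * p ^ (a - i) := by
            rw [← pow_add]; congr 1; omega
          rw [this, Nat.mul_add_div (by positivity),
            Nat.div_eq_of_lt (Nat.one_lt_pow hi0 hp.one_lt), Nat.add_zero]
        have h0 : (p ^ a + 1) / p ^ i % p = 0 := by
          rw [hdiv2]
          exact Nat.mod_eq_zero_of_dvd (dvd_pow_self p (by omega))
        rw [h0, Nat.choose_zero_right]
      · intro h
        exact absurd (mem_range.mpr (by omega)) h
    rw [← Nat.cast_mul, e2] at key
    exact key
  -- pass to ZMod p
  have hcne : (c : ZMod p) ≠ -1 := by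
    intro h
    have : ((c + 1 : ℕ) : ZMod p) = 0 := by push_cast [h]; ring
    exact hpm ((ZMod.natCast_eq_zero_iff _ _).mp this)
  have hpm1 : ((p - 1 : ℕ) : ZMod p) = -1 := by
    rw [Nat.cast_sub hp.one_le, ZMod.natCast_self, Nat.cast_one]
    ring
  have hC1 : ((n.choose (p ^ a) : ℕ) : ZMod p) = (c : ZMod p) := by
    have := (ZMod.intCast_eq_intCast_iff _ _ _).mpr key1
    push_cast at this ⊢
    exact this
  have hC2 : ((n.choose (p ^ a + 1) : ℕ) : ZMod p) = -(c : ZMod p) := by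
    have := (ZMod.intCast_eq_intCast_iff _ _ _).mpr key2
    push_cast at this
    rw [this, hpm1]
    ring
  have hoddpa : Odd (p ^ a) := (hp.odd_of_ne_two hp2).pow
  -- main reduction
  have main : ∀ k : ℕ, 2 ≤ k → k ≤ n - 2 →
      ((n.choose k : ZMod p) ≠ (-1) ^ k) → ((2 : ZMod p) ^ k ≠ -1) →
      (∃ k : ℕ, 2 ≤ k ∧ k ≤ n - 2 ∧
        ¬((p : ℤ) ∣ (2 ^ k + 1) * (1 + (-1) ^ (k + 1) * (n.choose k : ℤ))) ∧
        ¬((2 : ℤ) ^ k ≡ -1 [ZMOD p]) ∧ ¬((n.choose k : ℤ) ≡ (-1) ^ k [ZMOD p])) := by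
    intro k h1 h2 hA hB
    have hB' : ¬((2 : ℤ) ^ k ≡ -1 [ZMOD p]) := by
      rw [← ZMod.intCast_eq_intCast_iff]
      push_cast
      exact hB
    have hA' : ¬((n.choose k : ℤ) ≡ (-1) ^ k [ZMOD p]) := by
      rw [← ZMod.intCast_eq_intCast_iff]
      push_cast
      exact hA
    refine ⟨k, h1, h2, ?_, hB', hA'⟩
    intro hd
    rcases (Int.Prime.dvd_mul' hp hd) with h | h
    · apply hB
      have h0 : (((2 : ℤ) ^ k + 1 : ℤ) : ZMod p) = 0 :=
        (ZMod.intCast_zmod_eq_zero_iff_dvd _ _).mpr h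
      push_cast at h0
      linear_combination h0
    · apply hA
      have h0 : ((1 + (-1) ^ (k + 1) * (n.choose k : ℤ) : ℤ) : ZMod p) = 0 :=
        (ZMod.intCast_zmod_eq_zero_iff_dvd _ _).mpr h
      push_cast at h0
      have hsq : ((-1 : ZMod p)) ^ k * (-1 : ZMod p) ^ k = 1 := by
        rw [← mul_pow]; norm_num
      have h1 : (-1 : ZMod p) ^ k * (n.choose k : ZMod p) = 1 := by
        rw [pow_succ] at h0
        linear_combination -h0
      calc (n.choose k : ZMod p)
          = (-1 : ZMod p) ^ k * ((-1) ^ k * (n.choose k : ZMod p)) := by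
            rw [← mul_assoc, hsq, one_mul]
        _ = (-1 : ZMod p) ^ k := by rw [h1, mul_one]
  by_cases h2a : (2 : ZMod p) ^ (p ^ a) = -1
  · -- use k = p^a + 1
    apply main (p ^ a + 1) (by omega) (by omega)
    · rw [hC2, Even.neg_one_pow (by simpa using hoddpa.add_one)]
      intro h
      exact hcne (by linear_combination -h)
    · intro hcon
      rw [pow_succ, h2a] at hcon
      have h1 : (1 : ZMod p) = 0 := by linear_combination -hcon
      exact one_ne_zero h1
  · apply main (p ^ a) (by omega) (by omega)
    · rw [hC1, hoddpa.neg_one_pow]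
      exact hcne
    · exact h2a
end
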